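/- Let A₁ and A₂ be symmetric positive semi-definite K×K real matrices, and suppose the upper-left k×k block of A₁ is positive definite and there is a vector v ∈ ℝ^{k+1} with last coordinate −1 such that ⟨v, (A₂)_{[1:k+1,1:k+1]} v⟩ > 0. Then the upper-left (k+1)×(k+1) block of A₁ + A₂ is positive definite. -/

import Mathlib

/-!
Write `B` for the leading `(k+1)×(k+1)` block of `A₁`. If `xᵀ(B + (A₂)_{[1:k+1]})x = 0`, both
quadratic forms vanish at `x`, so `Bx = 0`. Since the leading `k×k` block of `B` is positive
definite, no nonzero kernel vector of `B` has last coordinate `0`; so `x` rescaled to last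
coordinate `-1` is a minimizer with value `0`, as is `v`, and their difference lies in the kernel
with last coordinate `0`. Hence `x` is a multiple of `v`, and `vᵀ(A₂)_{[1:k+1]}v > 0` forces `x = 0`.
-/

open Matrix

namespace Matrix

theorem PosSemidef.posDef_add_of_forall {n R : Type*} [Fintype n] [CommRing R] [PartialOrder R]
    [StarRing R] [IsOrderedAddMonoid R] {B C : Matrix n n R} (hB : B.PosSemidef) (hC : C.PosSemidef)
    (h : ∀ x : n → R, x ≠ 0 → star x ⬝ᵥ B *ᵥ x = 0 → 0 < star x ⬝ᵥ C *ᵥ x) :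
    (B + C).PosDef := by
  refine .of_dotProduct_mulVec_pos (hB.isHermitian.add hC.isHermitian) fun x hx => ?_
  rw [add_mulVec, dotProduct_add]
  rcases (hB.dotProduct_mulVec_nonneg x).lt_or_eq with hBx | hBx
  · exact add_pos_of_pos_of_nonneg hBx (hC.dotProduct_mulVec_nonneg x)
  · rw [← hBx, zero_add]
    exact h x hx hBx.symm

theorem dotProduct_mulVec_eq_init_of_last_eq_zero {k : ℕ} {R : Type*} [CommSemiring R]
    (B : Matrix (Fin (k + 1)) (Fin (k + 1)) R) {u : Fin (k + 1) → R} (hu : u (Fin.last k) = 0) :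
    u ⬝ᵥ B *ᵥ u = Fin.init u ⬝ᵥ B.submatrix Fin.castSucc Fin.castSucc *ᵥ Fin.init u := by
  simp [dotProduct, mulVec, Fin.sum_univ_castSucc, hu, Fin.init]

section LeadingBlock

variable {k : ℕ} {B : Matrix (Fin (k + 1)) (Fin (k + 1)) ℝ}

theorem eq_zero_of_last_eq_zero_of_dotProduct_mulVec_eq_zero
    (hB : (B.submatrix Fin.castSucc Fin.castSucc).PosDef) {u : Fin (k + 1) → ℝ}
    (hu : u (Fin.last k) = 0) (hq : u ⬝ᵥ B *ᵥ u = 0) : u = 0 := by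
  have hinit : Fin.init u = 0 := by
    by_contra hne
    have := hB.dotProduct_mulVec_pos hne
    rw [star_trivial, ← dotProduct_mulVec_eq_init_of_last_eq_zero B hu, hq] at this
    exact this.false
  rw [← Fin.snoc_init_self u, hinit, hu]
  ext i
  refine Fin.lastCases ?_ (fun j => ?_) i <;> simp

theorem PosSemidef.exists_eq_smul_snoc_of_dotProduct_mulVec_eq_zero (hB : B.PosSemidef)
    (hlead : (B.submatrix Fin.castSucc Fin.castSucc).PosDef) {β : Fin k → ℝ}
    (hmin : ∀ β' : Fin k → ℝ, (Fin.snoc β (-1) : Fin (k + 1) → ℝ) ⬝ᵥ B *ᵥ Fin.snoc β (-1)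
      ≤ (Fin.snoc β' (-1) : Fin (k + 1) → ℝ) ⬝ᵥ B *ᵥ Fin.snoc β' (-1))
    {x : Fin (k + 1) → ℝ} (hx : x ⬝ᵥ B *ᵥ x = 0) :
    ∃ c : ℝ, x = c • (Fin.snoc β (-1) : Fin (k + 1) → ℝ) := by
  set v : Fin (k + 1) → ℝ := Fin.snoc β (-1)
  have hkernel : ∀ u, u ⬝ᵥ B *ᵥ u = 0 → B *ᵥ u = 0 := fun u hu =>
    (hB.dotProduct_mulVec_zero_iff u).mp (by rwa [star_trivial])
  by_cases hlast : x (Fin.last k) = 0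
  · exact ⟨0, by
      rw [zero_smul]; exact eq_zero_of_last_eq_zero_of_dotProduct_mulVec_eq_zero hlead hlast hx⟩
  set c := -x (Fin.last k)
  have hc : c ≠ 0 := neg_ne_zero.mpr hlast
  set w := c⁻¹ • x
  have hw : w = Fin.snoc (Fin.init w) (-1) := by
    conv_lhs => rw [← Fin.snoc_init_self w]
    congr 1
    simp [w, c, hlast]
  have hqw : w ⬝ᵥ B *ᵥ w = 0 := by simp [w, mulVec_smul, hx]
  have hqv : v ⬝ᵥ B *ᵥ v = 0 := by
    have := hmin (Fin.init w)
    rw [← hw, hqw] at this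
    exact this.antisymm (by simpa using hB.dotProduct_mulVec_nonneg v)
  have hBvw : B *ᵥ (v - w) = 0 := by rw [mulVec_sub, hkernel v hqv, hkernel w hqw, sub_zero]
  have hvw : v = w := sub_eq_zero.mp <| eq_zero_of_last_eq_zero_of_dotProduct_mulVec_eq_zero hlead
    (by rw [Pi.sub_apply, hw]; simp [v]) (by rw [hBvw, dotProduct_zero])
  exact ⟨c, by rw [hvw, smul_inv_smul₀ hc]⟩

end LeadingBlock

end Matrix

/-- Rank-correction (Lemma 2): let `A₁, A₂` be symmetric PSD `K×K` matrices, the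
upper-left `k×k` block of `A₁` positive definite, and `v = (β, −1) ∈ ℝ^{k+1}` with `β`
minimizing `β' ↦ ⟨(β',−1), (A₁)_{[1:k+1]}(β',−1)⟩`, such that
`⟨v, (A₂)_{[1:k+1]} v⟩ > 0`. Then the upper-left `(k+1)×(k+1)` block of `A₁ + A₂` is
positive definite. -/
theorem stmt7 (K k : ℕ) (hK : k + 1 ≤ K)
    (A₁ A₂ : Matrix (Fin K) (Fin K) ℝ)
    (hA₁ : A₁.PosSemidef) (hA₂ : A₂.PosSemidef)
    (hBpd : (A₁.submatrix (Fin.castLE (Nat.le_of_succ_le hK))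
        (Fin.castLE (Nat.le_of_succ_le hK))).PosDef)
    (β : Fin k → ℝ)
    (hmin : ∀ β' : Fin k → ℝ,
      (Fin.snoc β (-1) : Fin (k + 1) → ℝ) ⬝ᵥ
          (A₁.submatrix (Fin.castLE hK) (Fin.castLE hK)).mulVec (Fin.snoc β (-1))
        ≤ (Fin.snoc β' (-1) : Fin (k + 1) → ℝ) ⬝ᵥ
            (A₁.submatrix (Fin.castLE hK) (Fin.castLE hK)).mulVec (Fin.snoc β' (-1)))
    (hpos : 0 < (Fin.snoc β (-1) : Fin (k + 1) → ℝ) ⬝ᵥ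
        (A₂.submatrix (Fin.castLE hK) (Fin.castLE hK)).mulVec (Fin.snoc β (-1))) :
    ((A₁ + A₂).submatrix (Fin.castLE hK) (Fin.castLE hK)).PosDef := by
  have hB₁ := hA₁.submatrix (Fin.castLE hK)
  rw [submatrix_add]
  refine hB₁.posDef_add_of_forall (hA₂.submatrix _) fun x hx hx₁ => ?_
  rw [star_trivial] at hx₁ ⊢
  -- `hBpd` is the leading `k×k` block of `hB₁`'s matrix, up to unfolding `Fin.castLE`.
  obtain ⟨c, rfl⟩ := hB₁.exists_eq_smul_snoc_of_dotProduct_mulVec_eq_zero hBpd hmin hx₁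
  have hc : c ≠ 0 := by rintro rfl; exact hx (zero_smul _ _)
  rw [mulVec_smul, smul_dotProduct, dotProduct_smul, smul_eq_mul, smul_eq_mul, ← mul_assoc]
  exact mul_pos (mul_self_pos.mpr hc) hpos
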